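/- Let V be a finite-dimensional vector space over a local field, and let μ be a finitely supported probability measure on GL(V) such that for every nonzero v ∈ V, for μ^⊗ℕ-almost every sequence (g₁, g₂, …), the norms ‖g_n ⋯ g₁ v‖ tend to infinity. Then the only μ-stationary probability measure on V is the Dirac mass at 0. -/

import Mathlib

/-!
Iterating stationarity gives `ν = ∑_w p_w (g_w)_* ν` over the words `w` of any length `n`, so for
every Borel set `A`, `ν A = ∫ β {b | g_{b_n} ⋯ g_{b_1} v ∈ A} dν(v)`. When `A` is a punctured
ball, the integrand vanishes at `v = 0` and tends to `0` at every `v ≠ 0` by the growth hypothesis,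
so dominated convergence gives `ν A = 0`. Exhausting `V ∖ {0}` by punctured balls, `ν` is
concentrated at `0`.
-/

open MeasureTheory Filter Topology

/-- `linComp g b n v = g (b (n-1)) (⋯ (g (b 0) v))`, i.e. `g_n ⋯ g_1 v` along the word. -/
def linComp {𝕜 V : Type*} [NontriviallyNormedField 𝕜] [NormedAddCommGroup V]
    [NormedSpace 𝕜 V] {k : ℕ} (g : Fin k → (V ≃L[𝕜] V)) (b : ℕ → Fin k) :
    ℕ → V → V
  | 0 => id
  | (n + 1) => fun v => g (b n) (linComp g b n v)

open scoped ENNReal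

section WordComp

variable {X ι : Type*} (f : ι → X → X)

def wordComp : {n : ℕ} → (Fin n → ι) → X → X
  | 0, _ => id
  | n + 1, w => f (w (Fin.last n)) ∘ wordComp (Fin.init w)

theorem wordComp_snoc {n : ℕ} (w : Fin n → ι) (i : ι) :
    wordComp f (Fin.snoc w i) = f i ∘ wordComp f w := by
  simp [wordComp, Fin.init_snoc]

variable [MeasurableSpace X] {f}

theorem measurable_wordComp (hf : ∀ i, Measurable (f i)) :
    ∀ {n : ℕ} (w : Fin n → ι), Measurable (wordComp f w)
  | 0, _ => measurable_id
  | _ + 1, w => (hf _).comp (measurable_wordComp hf (Fin.init w))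

theorem eq_sum_map_wordComp [Fintype ι] (hf : ∀ i, Measurable (f i)) {p : ι → ℝ≥0∞}
    {ν : Measure X} (hν : ν = ∑ i, p i • ν.map (f i)) (n : ℕ) :
    ν = ∑ w : Fin n → ι, (∏ j, p (w j)) • ν.map (wordComp f w) := by
  induction n with
  | zero => simp [wordComp, Measure.map_id]
  | succ n ih =>
    calc ν = ∑ i, p i • ν.map (f i) := hν
    _ = ∑ i, ∑ w : Fin n → ι, ((∏ j, p (w j)) * p i) • ν.map (f i ∘ wordComp f w) := by
        refine Finset.sum_congr rfl fun i _ => ?_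
        conv_lhs => rw [ih]
        rw [Measure.map_finset_sum' (hf i).aemeasurable, Finset.smul_sum]
        refine Finset.sum_congr rfl fun w _ => ?_
        rw [Measure.map_smul, Measure.map_map (hf i) (measurable_wordComp hf w), smul_smul,
          mul_comm]
    _ = ∑ w : Fin (n + 1) → ι, (∏ j, p (w j)) • ν.map (wordComp f w) := by
        rw [← (Fin.snocEquiv fun _ => ι).sum_comp, Fintype.sum_prod_type]
        simp [Fin.prod_univ_castSucc, Fin.snocEquiv, wordComp_snoc]

end WordComp

def IsBernoulliMeasure {ι : Type*} [MeasurableSpace ι] (p : ι → ℝ≥0∞)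
    (β : Measure (ℕ → ι)) : Prop :=
  ∀ (n : ℕ) (w : Fin n → ι), β {b | ∀ j : Fin n, b j = w j} = ∏ j, p (w j)

section Bernoulli

variable {X ι : Type*} [MeasurableSpace ι] [MeasurableSingletonClass ι] [Fintype ι]
  {p : ι → ℝ≥0∞} {β : Measure (ℕ → ι)}

theorem IsBernoulliMeasure.lintegral_comp_finRestrict (hβ : IsBernoulliMeasure p β) {n : ℕ}
    (h : (Fin n → ι) → ℝ≥0∞) :
    ∫⁻ b, h (fun j : Fin n => b j) ∂β = ∑ w, (∏ j, p (w j)) * h w := by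
  have hr : Measurable fun (b : ℕ → ι) (j : Fin n) => b j := by fun_prop
  rw [← lintegral_map .of_discrete hr, lintegral_fintype]
  refine Finset.sum_congr rfl fun w _ => ?_
  rw [Measure.map_apply hr (measurableSet_singleton w), mul_comm, ← hβ n w]
  congr 2
  ext b
  simp [funext_iff]

variable {f : ι → X → X}

theorem measurableSet_wordComp_mem (A : Set X) (n : ℕ) (x : X) :
    MeasurableSet {b : ℕ → ι | wordComp f (fun j : Fin n => b j) x ∈ A} :=
  (by fun_prop : Measurable fun (b : ℕ → ι) (j : Fin n) => b j)
    (.of_discrete (s := {w | wordComp f w x ∈ A}))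

theorem IsBernoulliMeasure.measure_wordComp_mem (hβ : IsBernoulliMeasure p β) (A : Set X)
    (n : ℕ) (x : X) :
    β {b | wordComp f (fun j : Fin n => b j) x ∈ A}
      = ∑ w : Fin n → ι, (∏ j, p (w j)) * A.indicator 1 (wordComp f w x) := by
  rw [← hβ.lintegral_comp_finRestrict,
    ← lintegral_indicator_one (measurableSet_wordComp_mem A n x)]
  rfl

variable [MeasurableSpace X]

theorem IsBernoulliMeasure.measurable_measure_wordComp_mem (hβ : IsBernoulliMeasure p β)
    (hf : ∀ i, Measurable (f i)) {A : Set X} (hA : MeasurableSet A) (n : ℕ) :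
    Measurable fun x => β {b | wordComp f (fun j : Fin n => b j) x ∈ A} := by
  simp_rw [hβ.measure_wordComp_mem]
  exact Finset.measurable_sum _ fun w _ =>
    ((measurable_one.indicator hA).comp (measurable_wordComp hf w)).const_mul _

theorem IsBernoulliMeasure.lintegral_measure_wordComp_mem (hβ : IsBernoulliMeasure p β)
    (hf : ∀ i, Measurable (f i)) {ν : Measure X} (hν : ν = ∑ i, p i • ν.map (f i))
    {A : Set X} (hA : MeasurableSet A) (n : ℕ) :
    ∫⁻ x, β {b | wordComp f (fun j : Fin n => b j) x ∈ A} ∂ν = ν A := by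
  have hmeas : ∀ w : Fin n → ι,
      Measurable fun x => A.indicator (1 : X → ℝ≥0∞) (wordComp f w x) :=
    fun w => (measurable_one.indicator hA).comp (measurable_wordComp hf w)
  conv_rhs => rw [eq_sum_map_wordComp hf hν n]
  simp_rw [hβ.measure_wordComp_mem]
  rw [lintegral_finsetSum _ fun w _ => (hmeas w).const_mul _]
  simp only [Measure.coe_finsetSum, Finset.sum_apply, Measure.smul_apply, smul_eq_mul]
  refine Finset.sum_congr rfl fun w _ => ?_
  rw [lintegral_const_mul _ (hmeas w), Measure.map_apply (measurable_wordComp hf w) hA,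
    ← lintegral_indicator_one (measurable_wordComp hf w hA)]
  rfl

theorem IsBernoulliMeasure.measure_eq_zero_of_tendsto_measure_wordComp_mem [IsFiniteMeasure β]
    (hβ : IsBernoulliMeasure p β) (hf : ∀ i, Measurable (f i)) {ν : Measure X}
    [IsFiniteMeasure ν] (hν : ν = ∑ i, p i • ν.map (f i)) {A : Set X} (hA : MeasurableSet A)
    (hlim : ∀ᵐ x ∂ν, Tendsto (fun n => β {b | wordComp f (fun j : Fin n => b j) x ∈ A})
      atTop (𝓝 0)) :
    ν A = 0 := by
  have := tendsto_lintegral_of_dominated_convergence (fun _ => β Set.univ)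
    (hβ.measurable_measure_wordComp_mem hf hA)
    (fun n => ae_of_all _ fun x => measure_mono (Set.subset_univ _))
    (by rw [lintegral_const]; finiteness) hlim
  simp_rw [hβ.lintegral_measure_wordComp_mem hf hν hA, lintegral_zero] at this
  exact tendsto_nhds_unique tendsto_const_nhds this

end Bernoulli

theorem eq_dirac_of_ae_eq {α : Type*} [MeasurableSpace α] {μ : Measure α} [IsProbabilityMeasure μ]
    {a : α} (h : ∀ᵐ x ∂μ, x = a) : μ = Measure.dirac a :=
  calc μ = μ.map id := Measure.map_id.symm
    _ = μ.map fun _ => a := Measure.map_congr h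
    _ = Measure.dirac a := by rw [Measure.map_const, measure_univ, one_smul]

section LinComp

variable {𝕜 V : Type*} [NontriviallyNormedField 𝕜] [NormedAddCommGroup V] [NormedSpace 𝕜 V]
  {k : ℕ} (g : Fin k → V ≃L[𝕜] V)

theorem linComp_eq_wordComp (b : ℕ → Fin k) (n : ℕ) :
    linComp g b n = wordComp (fun i => ⇑(g i)) (fun j : Fin n => b j) := by
  induction n with
  | zero => rfl
  | succ n ih => rw [linComp, ih]; rfl

theorem linComp_apply_zero (b : ℕ → Fin k) (n : ℕ) : linComp g b n 0 = 0 := by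
  induction n with
  | zero => rfl
  | succ n ih => simp [linComp, ih]

theorem tendsto_measure_wordComp_mem_closedBall_diff {β : Measure (ℕ → Fin k)} [IsFiniteMeasure β]
    (hgrowth : ∀ v : V, v ≠ 0 → ∀ᵐ b ∂β, Tendsto (fun n => ‖linComp g b n v‖) atTop atTop)
    (r : ℝ) (v : V) :
    Tendsto (fun n => β {b | wordComp (fun i => ⇑(g i)) (fun j : Fin n => b j) v ∈
      Metric.closedBall 0 r \ {0}}) atTop (𝓝 0) := by
  simp_rw [← linComp_eq_wordComp]
  rcases eq_or_ne v 0 with rfl | hv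
  · simp [linComp_apply_zero]
  · have hlim : ∀ᵐ b ∂β, ∀ᶠ n in atTop,
        b ∈ {b | linComp g b n v ∈ Metric.closedBall 0 r \ {0}} ↔ b ∈ (∅ : Set (ℕ → Fin k)) := by
      filter_upwards [hgrowth v hv] with b hb
      filter_upwards [hb.eventually_gt_atTop r] with n hn
      simp [hn.not_ge]
    have hmeas (n : ℕ) : MeasurableSet {b | linComp g b n v ∈ Metric.closedBall 0 r \ {0}} := by
      simpa only [linComp_eq_wordComp] using measurableSet_wordComp_mem _ n v
    simpa using tendsto_measure_of_ae_tendsto_indicator_of_isFiniteMeasure atTop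
      MeasurableSet.empty hmeas hlim

end LinComp

theorem stationary_measure_dirac_of_norm_growth_general
    {𝕜 V : Type*} [NontriviallyNormedField 𝕜]
    [NormedAddCommGroup V] [NormedSpace 𝕜 V]
    [MeasurableSpace V] [BorelSpace V]
    {k : ℕ} (g : Fin k → (V ≃L[𝕜] V))
    (p : Fin k → ENNReal)
    (β : Measure (ℕ → Fin k)) [IsProbabilityMeasure β]
    (hβ : ∀ (n : ℕ) (w : Fin n → Fin k),
      β {b | ∀ j : Fin n, b (j : ℕ) = w j} = ∏ j : Fin n, p (w j))
    (hgrowth : ∀ v : V, v ≠ 0 →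
      ∀ᵐ b ∂β, Tendsto (fun n : ℕ => ‖linComp g b n v‖) atTop atTop) :
    ∀ ν : Measure V, IsProbabilityMeasure ν →
      ν = ∑ i : Fin k, p i • ν.map (g i) → ν = Measure.dirac 0 := by
  intro ν hν hstat
  have hg : ∀ i, Measurable (g i) := fun i => (g i).continuous.measurable
  have hball : ∀ m : ℕ, ν (Metric.closedBall 0 m \ {0}) = 0 := fun m =>
    IsBernoulliMeasure.measure_eq_zero_of_tendsto_measure_wordComp_mem hβ hg hstat
      (Metric.isClosed_closedBall.measurableSet.diff (measurableSet_singleton 0))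
      (ae_of_all _ (tendsto_measure_wordComp_mem_closedBall_diff g hgrowth m))
  have hnull : ν {0}ᶜ = 0 := by
    rw [Set.compl_eq_univ_sdiff, ← Metric.iUnion_closedBall_nat 0, Set.iUnion_sdiff]
    exact measure_iUnion_null hball
  exact eq_dirac_of_ae_eq (ae_iff.mpr hnull)

/-- Let `V` be a finite-dimensional vector space over a local field and
`μ = ∑ p_i δ_{g i}` a finitely supported probability measure on `GL(V)` such that for
every `v ≠ 0`, for Bernoulli-almost every word, `‖g_n ⋯ g_1 v‖ → ∞`.  Then the only
`μ`-stationary probability measure on `V` is the Dirac mass at `0`. -/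
theorem stationary_measure_dirac_of_norm_growth
    {𝕜 V : Type*} [NontriviallyNormedField 𝕜] [CompleteSpace 𝕜] [LocallyCompactSpace 𝕜]
    [NormedAddCommGroup V] [NormedSpace 𝕜 V] [FiniteDimensional 𝕜 V]
    [MeasurableSpace V] [BorelSpace V]
    {k : ℕ} (g : Fin k → (V ≃L[𝕜] V))
    (p : Fin k → ENNReal) (hp : ∑ i, p i = 1) (hppos : ∀ i, 0 < p i)
    (β : Measure (ℕ → Fin k)) [IsProbabilityMeasure β]
    (hβ : ∀ (n : ℕ) (w : Fin n → Fin k),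
      β {b | ∀ j : Fin n, b (j : ℕ) = w j} = ∏ j : Fin n, p (w j))
    (hgrowth : ∀ v : V, v ≠ 0 →
      ∀ᵐ b ∂β, Tendsto (fun n : ℕ => ‖linComp g b n v‖) atTop atTop) :
    ∀ ν : Measure V, IsProbabilityMeasure ν →
      ν = ∑ i : Fin k, p i • ν.map (g i) → ν = Measure.dirac 0 :=
  stationary_measure_dirac_of_norm_growth_general g p β hβ hgrowth
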